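/- Let A be a commutative ring and (a₁, …, a_d) a regular sequence. Let B = A[x₁, …, x_{d−1}]/(aᵢ − a_d xᵢ for 1 ≤ i ≤ d−1), and consider the B-module map φ: B^d → B sending the i-th standard basis vector Tᵢ to aᵢ (where x_d is interpreted as 1, i.e. T_d ↦ a_d). Then the kernel of φ is the B-submodule generated by the elements Tᵢ − xᵢ·T_d for 1 ≤ i ≤ d−1. -/

import Mathlib

/-!
Lift an element of the kernel to `f : P^{d+1}` with `P = A[x₁,…,x_d]`. Then `∑ fᵢ aᵢ` lies in
the ideal generated by the `aᵢ - a_{d+1} xᵢ`, which is the image of the span of the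
`τᵢ = Tᵢ - xᵢ T_{d+1}`; after subtracting a combination of the `τᵢ`, `f` becomes a relation among
the `aᵢ` in `P`. Since `P` is flat over `A` the `aᵢ` stay weakly regular in `P`, so this relation
is a combination of Koszul relations `aⱼ Tᵢ - aᵢ Tⱼ`. In the quotient, `aᵢ = a_{d+1} xᵢ` turns each
Koszul relation into `a_{d+1} (xⱼ τᵢ - xᵢ τⱼ)`, which lies in the span of the `τᵢ`.
-/

open RingTheory.Sequence

section

variable {R : Type*} [CommRing R]

def koszulRelations {ι : Type*} [DecidableEq ι] (r : ι → R) : Set (ι → R) :=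
  Set.range fun p : ι × ι => r p.2 • Pi.single p.1 1 - r p.1 • Pi.single p.2 1

lemma Function.ExtendByZero.linearMap_single {ι η : Type*} [DecidableEq ι] [DecidableEq η]
    {s : ι → η} (hs : s.Injective) (i : ι) (x : R) :
    Function.ExtendByZero.linearMap R s (Pi.single i x) = Pi.single (s i) x := by
  funext j
  rw [Function.ExtendByZero.linearMap_apply]
  by_cases hj : ∃ k, s k = j
  · obtain ⟨k, rfl⟩ := hj
    simp [hs.extend_apply, Pi.single_apply, hs.eq_iff]
  · rw [Function.extend_apply' _ _ _ hj, Pi.single_apply, if_neg fun h => hj ⟨i, h.symm⟩]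
    rfl

lemma image_extendByZero_koszulRelations {ι η : Type*} [DecidableEq ι] [DecidableEq η]
    {s : ι → η} (hs : s.Injective) (r : η → R) :
    Function.ExtendByZero.linearMap R s '' koszulRelations (r ∘ s) ⊆ koszulRelations r := by
  rintro _ ⟨_, ⟨p, rfl⟩, rfl⟩
  exact ⟨(s p.1, s p.2), by simp [Function.ExtendByZero.linearMap_single hs]⟩

lemma Ideal.ofList_ofFn {n : ℕ} (r : Fin n → R) :
    Ideal.ofList (List.ofFn r) = Ideal.span (Set.range r) := by
  rw [Ideal.ofList]
  congr
  ext
  simp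

lemma koszulRelations_subset_ker {ι : Type*} [Fintype ι] [DecidableEq ι] (r : ι → R) :
    koszulRelations r ⊆ LinearMap.ker (Fintype.linearCombination R r) := by
  rintro _ ⟨p, rfl⟩
  simp [mul_comm]

lemma last_mem_span_of_mem_ker {n : ℕ} {r : Fin (n + 1) → R}
    (hr : IsSMulRegular (R ⧸ Ideal.span (Set.range fun i : Fin n => r i.castSucc)) (r (Fin.last n)))
    {b : Fin (n + 1) → R} (hb : b ∈ LinearMap.ker (Fintype.linearCombination R r)) :
    b (Fin.last n) ∈ Ideal.span (Set.range fun i : Fin n => r i.castSucc) := by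
  refine mem_of_isSMulRegular_quotient_of_smul_mem hr ?_
  rw [LinearMap.mem_ker, Fintype.linearCombination_apply, Fin.sum_univ_castSucc,
    add_eq_zero_iff_eq_neg'] at hb
  rw [smul_eq_mul, mul_comm, ← smul_eq_mul, hb]
  exact neg_mem (sum_mem fun i _ => Ideal.mul_mem_left _ _ (Ideal.subset_span ⟨i, rfl⟩))

lemma mem_span_koszulRelations_of_last_eq_zero {n : ℕ} {r : Fin (n + 1) → R}
    (hK : LinearMap.ker (Fintype.linearCombination R fun i : Fin n => r i.castSucc) ≤
      Submodule.span R (koszulRelations fun i : Fin n => r i.castSucc))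
    {w : Fin (n + 1) → R} (hw : w ∈ LinearMap.ker (Fintype.linearCombination R r))
    (hw_last : w (Fin.last n) = 0) :
    w ∈ Submodule.span R (koszulRelations r) := by
  have hw_ext : w = Function.ExtendByZero.linearMap R Fin.castSucc (fun i => w i.castSucc) := by
    funext j
    refine Fin.lastCases ?_ (fun i => ?_) j
    · simp [hw_last]
    · simp [(Fin.castSucc_injective n).extend_apply]
  have hinit : (fun i : Fin n => w i.castSucc) ∈
      LinearMap.ker (Fintype.linearCombination R fun i : Fin n => r i.castSucc) := by
    rw [LinearMap.mem_ker, Fintype.linearCombination_apply, Fin.sum_univ_castSucc] at hw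
    simpa [Fintype.linearCombination_apply, hw_last] using hw
  have := Submodule.mem_map_of_mem (f := Function.ExtendByZero.linearMap R Fin.castSucc) (hK hinit)
  rw [Submodule.map_span, ← hw_ext] at this
  exact Submodule.span_mono (image_extendByZero_koszulRelations (Fin.castSucc_injective n) r) this

theorem ker_linearCombination_le_span_koszulRelations :
    ∀ {n : ℕ} {r : Fin n → R}, IsWeaklyRegular R (List.ofFn r) →
      LinearMap.ker (Fintype.linearCombination R r) ≤ Submodule.span R (koszulRelations r)
  | 0, r, _ => fun b _ => by rw [Subsingleton.elim b 0]; exact zero_mem _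
  | n + 1, r, hr => by
    rw [List.ofFn_succ', List.concat_eq_append, isWeaklyRegular_append_iff,
      isWeaklyRegular_singleton_iff, Ideal.smul_eq_mul, Ideal.mul_top, Ideal.ofList_ofFn] at hr
    intro b hb
    obtain ⟨c, hc⟩ := (Submodule.mem_span_range_iff_exists_fun R).mp
      (last_mem_span_of_mem_ker hr.2 hb)
    set κ : Fin n → Fin (n + 1) → R :=
      fun i => r (Fin.last n) • Pi.single i.castSucc 1 - r i.castSucc • Pi.single (Fin.last n) 1
    have hκ : ∀ i, κ i ∈ koszulRelations r := fun i => ⟨(i.castSucc, Fin.last n), rfl⟩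
    have hw := mem_span_koszulRelations_of_last_eq_zero
      (ker_linearCombination_le_span_koszulRelations hr.1) (w := b + ∑ i, c i • κ i)
      (add_mem hb (sum_mem fun i _ => Submodule.smul_mem _ _ (koszulRelations_subset_ker r (hκ i))))
      (by simp [κ, ← hc])
    have hsum : ∑ i, c i • κ i ∈ Submodule.span R (koszulRelations r) :=
      sum_mem fun i _ => Submodule.smul_mem _ _ (Submodule.subset_span (hκ i))
    simpa using sub_mem hw hsum

lemma RingTheory.Sequence.IsWeaklyRegular.map_algebraMap_of_flat {S : Type*} [CommRing S]
    [Algebra R S] [Module.Flat R S] {rs : List R} (h : IsWeaklyRegular R rs) :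
    IsWeaklyRegular S (rs.map (algebraMap R S)) :=
  (isWeaklyRegular_map_algebraMap_iff S S rs).mpr <|
    ((TensorProduct.rid R S).isWeaklyRegular_congr rs).mp h.isWeaklyRegular_lTensor

theorem koszulRelations_subset_span_of_eq_mul {n : ℕ} (r : Fin (n + 1) → R) (y : Fin n → R)
    (hry : ∀ i, r i.castSucc = r (Fin.last n) * y i) :
    koszulRelations r ⊆ Submodule.span R
      (Set.range fun i => Pi.single i.castSucc 1 - y i • Pi.single (Fin.last n) 1) := by
  set y' : Fin (n + 1) → R := Fin.snoc y 1
  have hr : ∀ i, r i = r (Fin.last n) * y' i :=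
    Fin.lastCases (by simp [y']) fun i => by simp [y', hry]
  have hτ : ∀ i, (Pi.single i 1 - y' i • Pi.single (Fin.last n) 1 : Fin (n + 1) → R) ∈
      Submodule.span R
        (Set.range fun i => Pi.single i.castSucc 1 - y i • Pi.single (Fin.last n) 1) :=
    Fin.lastCases (by simp [y']) fun i => Submodule.subset_span ⟨i, by simp [y']⟩
  rintro _ ⟨⟨i, j⟩, rfl⟩
  dsimp only
  have hκ : r j • (Pi.single i 1 : Fin (n + 1) → R) - r i • Pi.single j 1 =
      (r (Fin.last n) * y' j) • (Pi.single i 1 - y' i • Pi.single (Fin.last n) 1) -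
        (r (Fin.last n) * y' i) • (Pi.single j 1 - y' j • Pi.single (Fin.last n) 1) := by
    conv_lhs => rw [hr i, hr j]
    module
  rw [SetLike.mem_coe, hκ]
  exact sub_mem (Submodule.smul_mem _ _ (hτ i)) (Submodule.smul_mem _ _ (hτ j))

theorem restrictScalars_ker_linearCombination_quotient {ι : Type*} [Fintype ι] (I : Ideal R)
    (r : ι → R) (N : Submodule R (ι → R))
    (hN : N.map (Fintype.linearCombination R r) = I) :
    (LinearMap.ker (Fintype.linearCombination (R ⧸ I) fun i => Ideal.Quotient.mk I (r i))
      ).restrictScalars R =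
      (N ⊔ LinearMap.ker (Fintype.linearCombination R r)).map (I.mkQ.compLeft ι) := by
  set φ := Fintype.linearCombination (R ⧸ I) fun i => Ideal.Quotient.mk I (r i)
  set Φ := Fintype.linearCombination R r
  set π := I.mkQ.compLeft ι
  have hcomm : ∀ v, φ (π v) = Ideal.Quotient.mk I (Φ v) := by
    intro v
    simp [φ, Φ, π, Fintype.linearCombination_apply, mul_comm]
  calc (LinearMap.ker φ).restrictScalars R
      = Submodule.map π (Submodule.comap π ((LinearMap.ker φ).restrictScalars R)) :=
        (Submodule.map_comap_eq_of_surjective I.mkQ_surjective.comp_left _).symm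
    _ = Submodule.map π (Submodule.comap Φ I) := by
        congr 1
        ext v
        simp [hcomm, Ideal.Quotient.eq_zero_iff_mem]
    _ = Submodule.map π (N ⊔ LinearMap.ker Φ) := by
        rw [← Submodule.comap_map_eq, hN]

lemma image_compLeft_mkQ_koszulRelations {ι : Type*} [DecidableEq ι] (I : Ideal R) (r : ι → R) :
    I.mkQ.compLeft ι '' koszulRelations r = koszulRelations fun i => Ideal.Quotient.mk I (r i) := by
  rw [koszulRelations, ← Set.range_comp]
  refine congrArg Set.range (funext fun p => funext fun k => ?_)
  simp [Pi.single_apply, Ideal.Quotient.mk_eq_mk, apply_ite (Ideal.Quotient.mk I)]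

theorem ker_linearCombination_quotient_eq_span {n : ℕ} (r : Fin (n + 1) → R) (y : Fin n → R)
    (I : Ideal R) (hI : I = Ideal.span (Set.range fun i => r i.castSucc - r (Fin.last n) * y i))
    (hr : LinearMap.ker (Fintype.linearCombination R r) ≤ Submodule.span R (koszulRelations r)) :
    LinearMap.ker (Fintype.linearCombination (R ⧸ I) fun i => Ideal.Quotient.mk I (r i)) =
      Submodule.span (R ⧸ I) (Set.range fun i =>
        Pi.single i.castSucc 1 - Ideal.Quotient.mk I (y i) • Pi.single (Fin.last n) 1) := by
  set π := I.mkQ.compLeft (Fin (n + 1))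
  set τ : Fin n → Fin (n + 1) → R :=
    fun i => Pi.single i.castSucc 1 - y i • Pi.single (Fin.last n) 1
  set T : Set (Fin (n + 1) → R ⧸ I) := Set.range fun i =>
    Pi.single i.castSucc 1 - Ideal.Quotient.mk I (y i) • Pi.single (Fin.last n) 1
  have hτ : (Submodule.span R (Set.range τ)).map (Fintype.linearCombination R r) = I := by
    rw [Submodule.map_span, ← Set.range_comp, hI]
    exact congrArg _ (congrArg Set.range (funext fun i => by simp [τ, mul_comm]))
  have hT : (Submodule.span (R ⧸ I) T).restrictScalars R =
      (Submodule.span R (Set.range τ)).map π := by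
    rw [Submodule.restrictScalars_span _ _ Ideal.Quotient.mk_surjective, Submodule.map_span,
      ← Set.range_comp]
    refine congrArg _ (congrArg Set.range (funext fun i => funext fun k => ?_))
    simp [τ, π, Pi.single_apply, Ideal.Quotient.mk_eq_mk, apply_ite (Ideal.Quotient.mk I)]
  have hκ : (Submodule.span R (koszulRelations r)).map π ≤
      (Submodule.span (R ⧸ I) T).restrictScalars R := by
    rw [Submodule.map_span, image_compLeft_mkQ_koszulRelations, Submodule.span_le,
      Submodule.coe_restrictScalars]
    refine koszulRelations_subset_span_of_eq_mul _ (fun i => Ideal.Quotient.mk I (y i)) fun i => ?_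
    rw [← map_mul, Ideal.Quotient.eq, hI]
    exact Ideal.subset_span ⟨i, rfl⟩
  apply Submodule.restrictScalars_injective R
  rw [restrictScalars_ker_linearCombination_quotient I r _ hτ, Submodule.map_sup]
  exact le_antisymm (sup_le hT.ge ((Submodule.map_mono hr).trans hκ)) (hT.le.trans le_sup_left)

end

open MvPolynomial

/-- Kernel of the map `B^{d+1} → B`, `Tᵢ ↦ aᵢ`, on the blow-up chart
`B = A[x₁,…,x_d]/(aᵢ - a_{d+1} xᵢ)`: it is generated by the elements
`Tᵢ - xᵢ·T_{d+1}`. -/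
theorem stmt2 (A : Type*) [CommRing A] (d : ℕ) (a : Fin (d + 1) → A)
    (hreg : RingTheory.Sequence.IsRegular A (List.ofFn a))
    (I : Ideal (MvPolynomial (Fin d) A))
    (hI : I = Ideal.span (Set.range fun i : Fin d =>
      C (a i.castSucc) - C (a (Fin.last d)) * X i)) :
    LinearMap.ker
        (Fintype.linearCombination (MvPolynomial (Fin d) A ⧸ I)
          (fun i : Fin (d + 1) => Ideal.Quotient.mk I (C (a i)))) =
      Submodule.span (MvPolynomial (Fin d) A ⧸ I)
        (Set.range fun i : Fin d =>
          (Pi.single i.castSucc 1 : Fin (d + 1) → MvPolynomial (Fin d) A ⧸ I) -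
          Ideal.Quotient.mk I (X i) •
            (Pi.single (Fin.last d) 1 : Fin (d + 1) → MvPolynomial (Fin d) A ⧸ I)) := by
  refine ker_linearCombination_quotient_eq_span (fun i => C (a i)) X I hI
    (ker_linearCombination_le_span_koszulRelations ?_)
  have := hreg.toIsWeaklyRegular.map_algebraMap_of_flat (S := MvPolynomial (Fin d) A)
  rwa [List.map_ofFn, algebraMap_eq] at this
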